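/- Let A ∈ ℝ^{n×n} be an H₊-matrix with diagonal part D, let φ be a nonnegative diagonal matrix with the diagonal entries of M + φ positive, and let A = (M + φ) − (N + φ) be an H-splitting, i.e. ⟨M + φ⟩ − |N + φ| is a nonsingular M-matrix. Let Ω₁, Ω₂ be positive diagonal matrices with Ω₂ ≥ D_{Ω₁}, let Ψ ≥ 0 with |ζ(u) − ζ(v)| ≤ Ψ|u − v| entrywise for all u, v, and suppose ⟨M_{Ω₁}⟩ − |N_{Ω₁}| − 2|A|Ψ|A⁻¹|Ω₂ is a nonsingular M-matrix. Then ρ(T) < 1 for T = |(Ω₂ + M_{Ω₁} + φ_{Ω₁})⁻¹|·(|N_{Ω₁} + φ_{Ω₁}| + |Ω₂ − A_{Ω₁}| + 2|A|Ψ|A⁻¹|Ω₂), and consequently for every initial vector x^(0) the sequences x^(k), z^(k) generated by Method 3.1 converge (z^(k) converges to the solution z* of ICP(q,A,ζ) corresponding to the unique fixed point x*). -/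

import Mathlib

open Matrix Filter Topology

noncomputable section

variable {n : ℕ}

/-- entrywise absolute value of a vector -/
def vecAbs (x : Fin n → ℝ) : Fin n → ℝ := fun i => |x i|

/-- entrywise absolute value of a matrix -/
def matAbs (A : Matrix (Fin n) (Fin n) ℝ) : Matrix (Fin n) (Fin n) ℝ :=
  Matrix.of fun i j => |A i j|

/-- positive diagonal matrix -/
def PosDiag (Ω : Matrix (Fin n) (Fin n) ℝ) : Prop := Ω.IsDiag ∧ ∀ i, 0 < Ω i i

/-- comparison matrix ⟨A⟩ -/
def compMat (A : Matrix (Fin n) (Fin n) ℝ) : Matrix (Fin n) (Fin n) ℝ :=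
  Matrix.of fun i j => if i = j then |A i j| else -|A i j|

/-- Z-matrix: nonpositive off-diagonal entries -/
def IsZmat (A : Matrix (Fin n) (Fin n) ℝ) : Prop := ∀ i j, i ≠ j → A i j ≤ 0

/-- nonsingular M-matrix: a Z-matrix, invertible, with entrywise nonnegative inverse -/
def IsMmat (A : Matrix (Fin n) (Fin n) ℝ) : Prop :=
  IsZmat A ∧ IsUnit A ∧ ∀ i j, 0 ≤ A⁻¹ i j

/-- H₊-matrix: comparison matrix is a nonsingular M-matrix, positive diagonal entries -/
def IsHplus (A : Matrix (Fin n) (Fin n) ℝ) : Prop :=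
  IsMmat (compMat A) ∧ ∀ i, 0 < A i i

/-- P-matrix: all principal minors are positive -/
def IsPmat (A : Matrix (Fin n) (Fin n) ℝ) : Prop :=
  ∀ s : Finset (Fin n),
    0 < (A.submatrix (fun i : {i // i ∈ s} => (i : Fin n))
          (fun i : {i // i ∈ s} => (i : Fin n))).det

/-- spectral radius, via the complex spectrum -/
def specRad (A : Matrix (Fin n) (Fin n) ℝ) : ℝ :=
  sSup ((fun μ : ℂ => ‖μ‖) '' spectrum ℂ (A.map Complex.ofReal))

/-- spectral (operator 2-) norm -/
def spec2Norm (A : Matrix (Fin n) (Fin n) ℝ) : ℝ :=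
  ‖Matrix.toEuclideanCLM (𝕜 := ℝ) A‖

/-- strict diagonal dominance -/
def SDD (A : Matrix (Fin n) (Fin n) ℝ) : Prop :=
  ∀ i, (∑ j ∈ Finset.univ.erase i, |A i j|) < |A i i|

/-- `z` solves the implicit complementarity problem ICP(q, A, ζ) -/
def SolvesICP (A : Matrix (Fin n) (Fin n) ℝ) (q : Fin n → ℝ)
    (ζ : (Fin n → ℝ) → (Fin n → ℝ)) (z : Fin n → ℝ) : Prop :=
  (∀ i, 0 ≤ (A.mulVec z + q) i) ∧ (∀ i, 0 ≤ (z - ζ z) i) ∧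
    (z - ζ z) ⬝ᵥ (A.mulVec z + q) = 0

/-- the sequences `x`, `z` are produced by Method 3.1 -/
def Method31 (A M N φ Ω₁ Ω₂ : Matrix (Fin n) (Fin n) ℝ) (q : Fin n → ℝ)
    (ζ : (Fin n → ℝ) → (Fin n → ℝ)) (γ : ℝ) (x z : ℕ → Fin n → ℝ) : Prop :=
  (∀ k, A *ᵥ z k = γ⁻¹ • (Ω₂ *ᵥ (vecAbs (x k) - x k)) - q) ∧
  (∀ k, x (k+1) = (Ω₂ + M * Ω₁ + φ * Ω₁)⁻¹ *ᵥ
      ((N * Ω₁ + φ * Ω₁) *ᵥ x k + (Ω₂ - A * Ω₁) *ᵥ vecAbs (x k)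
        - γ • (A *ᵥ ζ (z k)) - γ • q))

namespace ICPAux

lemma mulVec_apply (M : Matrix (Fin n) (Fin n) ℝ) (x : Fin n → ℝ) (i : Fin n) :
    (M *ᵥ x) i = ∑ j, M i j * x j := rfl

lemma matAbs_apply (M : Matrix (Fin n) (Fin n) ℝ) (i j : Fin n) : matAbs M i j = |M i j| := rfl

lemma compMat_apply_diag (M : Matrix (Fin n) (Fin n) ℝ) (i : Fin n) : compMat M i i = |M i i| := by
  simp [compMat]

lemma compMat_apply_off (M : Matrix (Fin n) (Fin n) ℝ) {i j : Fin n} (h : i ≠ j) :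
    compMat M i j = -|M i j| := by simp [compMat, h]

lemma compMat_off_nonpos (M : Matrix (Fin n) (Fin n) ℝ) {i j : Fin n} (h : i ≠ j) :
    compMat M i j ≤ 0 := by rw [compMat_apply_off M h]; exact neg_nonpos.mpr (abs_nonneg _)

lemma compMat_compMat (M : Matrix (Fin n) (Fin n) ℝ) : compMat (compMat M) = compMat M := by
  ext i j
  by_cases h : i = j
  · subst h; simp [compMat, abs_abs]
  · simp [compMat, h, abs_abs]

lemma mul_diag_apply (M Ω : Matrix (Fin n) (Fin n) ℝ) (hΩ : Ω.IsDiag) (i j : Fin n) :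
    (M * Ω) i j = M i j * Ω j j := by
  rw [Matrix.mul_apply]
  rw [Finset.sum_eq_single j]
  · intro k _ hk
    rw [hΩ hk, mul_zero]
  · intro h; exact absurd (Finset.mem_univ j) h

lemma diag_mulVec_apply (Ω : Matrix (Fin n) (Fin n) ℝ) (hΩ : Ω.IsDiag) (x : Fin n → ℝ) (i : Fin n) :
    (Ω *ᵥ x) i = Ω i i * x i := by
  rw [mulVec_apply]
  rw [Finset.sum_eq_single i]
  · intro k _ hk
    rw [hΩ (Ne.symm hk), zero_mul]
  · intro h; exact absurd (Finset.mem_univ i) h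

/-- monotonicity through nonnegative matrices -/
lemma mulVec_mono {P : Matrix (Fin n) (Fin n) ℝ} (hP : ∀ i j, 0 ≤ P i j)
    {a b : Fin n → ℝ} (hab : ∀ j, a j ≤ b j) (i : Fin n) : (P *ᵥ a) i ≤ (P *ᵥ b) i := by
  rw [mulVec_apply, mulVec_apply]
  apply Finset.sum_le_sum
  intro j _
  exact mul_le_mul_of_nonneg_left (hab j) (hP i j)

lemma mulVec_nonneg {P : Matrix (Fin n) (Fin n) ℝ} (hP : ∀ i j, 0 ≤ P i j)
    {a : Fin n → ℝ} (ha : ∀ j, 0 ≤ a j) (i : Fin n) : 0 ≤ (P *ᵥ a) i := by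
  rw [mulVec_apply]
  exact Finset.sum_nonneg fun j _ => mul_nonneg (hP i j) (ha j)

lemma abs_mulVec_le (P : Matrix (Fin n) (Fin n) ℝ) (x : Fin n → ℝ) (i : Fin n) :
    |(P *ᵥ x) i| ≤ (matAbs P *ᵥ vecAbs x) i := by
  rw [mulVec_apply, mulVec_apply]
  calc |∑ j, P i j * x j| ≤ ∑ j, |P i j * x j| := Finset.abs_sum_le_sum_abs _ _
  _ = ∑ j, matAbs P i j * vecAbs x j := by
      apply Finset.sum_congr rfl; intro j _; rw [abs_mul]; rfl

lemma mul_entries_nonneg {P Q : Matrix (Fin n) (Fin n) ℝ} (hP : ∀ i j, 0 ≤ P i j)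
    (hQ : ∀ i j, 0 ≤ Q i j) : ∀ i j, 0 ≤ (P * Q) i j := by
  intro i j
  rw [Matrix.mul_apply]
  exact Finset.sum_nonneg fun k _ => mul_nonneg (hP i k) (hQ k j)

/-- Z-matrices with a positive witness are "monotone": Zd ≤ 0 → d ≤ 0. -/
lemma zmat_mono (Z : Matrix (Fin n) (Fin n) ℝ) (v d : Fin n → ℝ)
    (hZ : ∀ i j, i ≠ j → Z i j ≤ 0) (hv : ∀ i, 0 < v i)
    (hZv : ∀ i, 0 < (Z *ᵥ v) i) (hd : ∀ i, (Z *ᵥ d) i ≤ 0) :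
    ∀ i, d i ≤ 0 := by
  by_contra h
  push_neg at h
  obtain ⟨i₁, hi₁⟩ := h
  have hne : (Finset.univ : Finset (Fin n)).Nonempty := ⟨i₁, Finset.mem_univ _⟩
  obtain ⟨i₀, -, hi₀⟩ := Finset.exists_mem_eq_sup' hne (fun i => d i / v i)
  set α := Finset.univ.sup' hne (fun i => d i / v i) with hα
  have hαpos : 0 < α := by
    have h1 : d i₁ / v i₁ ≤ α := Finset.le_sup' (fun i => d i / v i) (Finset.mem_univ i₁)
    have : 0 < d i₁ / v i₁ := div_pos hi₁ (hv i₁)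
    linarith
  have hle : ∀ j, d j ≤ α * v j := by
    intro j
    have h1 : d j / v j ≤ α := Finset.le_sup' (fun i => d i / v i) (Finset.mem_univ j)
    rw [div_le_iff₀ (hv j)] at h1
    linarith [h1]
  have heq : d i₀ = α * v i₀ := by
    have h2 : α = d i₀ / v i₀ := hi₀
    rw [h2, div_mul_cancel₀ _ (hv i₀).ne']
  have hkey : α * (Z *ᵥ v) i₀ ≤ (Z *ᵥ d) i₀ := by
    rw [mulVec_apply, mulVec_apply, Finset.mul_sum]
    apply Finset.sum_le_sum
    intro j _
    by_cases hj : j = i₀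
    · subst hj; rw [heq]; ring_nf; exact le_refl _
    · have h1 : Z i₀ j ≤ 0 := hZ i₀ j (fun hh => hj hh.symm)
      have := mul_le_mul_of_nonpos_left (hle j) h1
      nlinarith [this]
  nlinarith [hZv i₀, hd i₀, hkey, hαpos]

/-- ⟨B⟩|s| ≤ |Bs| entrywise -/
lemma comp_mulVec_abs_le (B : Matrix (Fin n) (Fin n) ℝ) (s : Fin n → ℝ) (i : Fin n) :
    (compMat B *ᵥ vecAbs s) i ≤ |(B *ᵥ s) i| := by
  rw [mulVec_apply, mulVec_apply]
  have e2 : ∑ j ∈ Finset.univ.erase i, compMat B i j * vecAbs s j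
      = -∑ j ∈ Finset.univ.erase i, |B i j * s j| := by
    rw [← Finset.sum_neg_distrib]
    apply Finset.sum_congr rfl
    intro j hj
    have hij : i ≠ j := fun hh => (Finset.mem_erase.mp hj).1 hh.symm
    rw [compMat_apply_off B hij, abs_mul]
    show -|B i j| * |s j| = -(|B i j| * |s j|)
    ring
  have h1 : ∑ j, compMat B i j * vecAbs s j
      = |B i i * s i| - ∑ j ∈ Finset.univ.erase i, |B i j * s j| := by
    rw [← Finset.add_sum_erase _ (fun j => compMat B i j * vecAbs s j) (Finset.mem_univ i), e2,
      compMat_apply_diag, abs_mul]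
    show |B i i| * |s i| + -_ = _
    ring
  rw [h1]
  have h2 : ∑ j, B i j * s j = B i i * s i + ∑ j ∈ Finset.univ.erase i, B i j * s j :=
    (Finset.add_sum_erase _ (fun j => B i j * s j) (Finset.mem_univ i)).symm
  have h3 : |B i i * s i| ≤ |∑ j, B i j * s j| + ∑ j ∈ Finset.univ.erase i, |B i j * s j| := by
    calc |B i i * s i| = |(∑ j, B i j * s j) - ∑ j ∈ Finset.univ.erase i, B i j * s j| := by
          rw [h2]; ring_nf
    _ ≤ |∑ j, B i j * s j| + |∑ j ∈ Finset.univ.erase i, B i j * s j| := abs_sub _ _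
    _ ≤ _ := by
        gcongr
        exact Finset.abs_sum_le_sum_abs _ _
  linarith

/-- bound on solutions of Bs = y given a comparison-matrix supersolution -/
lemma solution_bound (B : Matrix (Fin n) (Fin n) ℝ) (v : Fin n → ℝ) (hv : ∀ i, 0 < v i)
    (hBv : ∀ i, 0 < (compMat B *ᵥ v) i) (s y t : Fin n → ℝ) (hs : B *ᵥ s = y)
    (ht : ∀ i, |y i| ≤ (compMat B *ᵥ t) i) : ∀ i, |s i| ≤ t i := by
  have h1 : ∀ i, (compMat B *ᵥ (vecAbs s - t)) i ≤ 0 := by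
    intro i
    rw [Matrix.mulVec_sub]
    have h2 := comp_mulVec_abs_le B s i
    rw [hs] at h2
    have := ht i
    simp only [Pi.sub_apply]
    linarith
  have := zmat_mono (compMat B) v (vecAbs s - t)
    (fun i j hij => compMat_off_nonpos B hij) hv hBv h1
  intro i
  have h3 := this i
  simp only [Pi.sub_apply] at h3
  calc |s i| = vecAbs s i := rfl
  _ ≤ t i := by linarith

lemma det_isUnit_of_comp (B : Matrix (Fin n) (Fin n) ℝ) (v : Fin n → ℝ) (hv : ∀ i, 0 < v i)
    (hBv : ∀ i, 0 < (compMat B *ᵥ v) i) : IsUnit B.det := by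
  rw [isUnit_iff_ne_zero]
  intro hdet
  obtain ⟨s, hs0, hs⟩ := Matrix.exists_mulVec_eq_zero_iff.mpr hdet
  have := solution_bound B v hv hBv s 0 0 hs (by simp [Matrix.mulVec_zero])
  apply hs0
  funext i
  have h := this i
  simp only [Pi.zero_apply] at h
  exact abs_nonpos_iff.mp h

/-- the standard positive vector associated to an invertible matrix with nonneg inverse -/
lemma inv_one_vec (W : Matrix (Fin n) (Fin n) ℝ) (hZ : ∀ i j, i ≠ j → W i j ≤ 0)
    (hU : IsUnit W.det) (hinv : ∀ i j, 0 ≤ W⁻¹ i j) :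
    ∃ v : Fin n → ℝ, (∀ i, 0 < v i) ∧ (∀ i, (W *ᵥ v) i = 1) ∧ (∀ i, 1 ≤ W i i * v i) := by
  set v := W⁻¹ *ᵥ (fun _ => (1:ℝ)) with hvdef
  have hWW : W * W⁻¹ = 1 := Matrix.mul_nonsing_inv _ hU
  have hWv : ∀ i, (W *ᵥ v) i = 1 := by
    intro i
    rw [hvdef, Matrix.mulVec_mulVec, hWW, Matrix.one_mulVec]
  have hv0 : ∀ i, 0 ≤ v i := by
    intro i
    rw [hvdef]
    exact mulVec_nonneg hinv (fun _ => zero_le_one) i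
  have hdiag : ∀ i, 1 ≤ W i i * v i := by
    intro i
    have h1 := hWv i
    rw [mulVec_apply, ← Finset.add_sum_erase _ (fun j => W i j * v j) (Finset.mem_univ i)] at h1
    have h2 : ∑ j ∈ Finset.univ.erase i, W i j * v j ≤ 0 := by
      apply Finset.sum_nonpos
      intro j hj
      have hij : i ≠ j := fun hh => (Finset.mem_erase.mp hj).1 hh.symm
      exact mul_nonpos_of_nonpos_of_nonneg (hZ i j hij) (hv0 j)
    linarith
  refine ⟨v, ?_, hWv, hdiag⟩
  intro i
  rcases (hv0 i).lt_or_eq with h | h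
  · exact h
  · exfalso
    have := hdiag i
    rw [← h, mul_zero] at this
    linarith

/-- Perron-type bound: nonnegative matrix with subinvariant positive vector. -/
lemma specRad_le (T : Matrix (Fin n) (Fin n) ℝ) (hT : ∀ i j, 0 ≤ T i j)
    (v : Fin n → ℝ) (hv : ∀ i, 0 < v i) (c : ℝ) (hc : 0 ≤ c)
    (hTv : ∀ i, (T *ᵥ v) i ≤ c * v i) : specRad T ≤ c := by
  rw [specRad]
  apply Real.sSup_le _ hc
  rintro r ⟨μ, hμ, rfl⟩
  rw [spectrum.mem_iff] at hμ
  have hdet : (algebraMap ℂ (Matrix (Fin n) (Fin n) ℂ) μ - T.map Complex.ofReal).det = 0 := by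
    by_contra h
    exact hμ ((Matrix.isUnit_iff_isUnit_det _).mpr (isUnit_iff_ne_zero.mpr h))
  obtain ⟨g, hg0, hg⟩ := Matrix.exists_mulVec_eq_zero_iff.mpr hdet
  have heig : T.map Complex.ofReal *ᵥ g = μ • g := by
    rw [Matrix.sub_mulVec] at hg
    have h2 : (algebraMap ℂ (Matrix (Fin n) (Fin n) ℂ) μ) *ᵥ g = μ • g := by
      rw [Algebra.algebraMap_eq_smul_one, Matrix.smul_mulVec, Matrix.one_mulVec]
    rw [h2, sub_eq_zero] at hg
    exact hg.symm
  have hbound : ∀ i, ‖μ‖ * ‖g i‖ ≤ ∑ j, T i j * ‖g j‖ := by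
    intro i
    have h1 : μ * g i = ∑ j, (T i j : ℂ) * g j := by
      have h0 := congrFun heig i
      have h0' : (T.map Complex.ofReal *ᵥ g) i = ∑ j, (T i j : ℂ) * g j := rfl
      rw [h0'] at h0
      simp only [Pi.smul_apply, smul_eq_mul] at h0
      exact h0.symm
    calc ‖μ‖ * ‖g i‖ = ‖μ * g i‖ := (norm_mul _ _).symm
    _ = ‖∑ j, (T i j : ℂ) * g j‖ := by rw [h1]
    _ ≤ ∑ j, ‖(T i j : ℂ) * g j‖ := norm_sum_le _ _
    _ = ∑ j, T i j * ‖g j‖ := by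
        apply Finset.sum_congr rfl
        intro j _
        rw [norm_mul, Complex.norm_real, Real.norm_eq_abs, abs_of_nonneg (hT i j)]
  obtain ⟨i₁, hi₁⟩ := Function.ne_iff.mp hg0
  have hne : (Finset.univ : Finset (Fin n)).Nonempty := ⟨i₁, Finset.mem_univ _⟩
  obtain ⟨i₀, -, hi₀⟩ := Finset.exists_mem_eq_sup' hne (fun i => ‖g i‖ / v i)
  set α := Finset.univ.sup' hne (fun i => ‖g i‖ / v i) with hα
  have hαpos : 0 < α := by
    have h1 : ‖g i₁‖ / v i₁ ≤ α :=
      Finset.le_sup' (fun i => ‖g i‖ / v i) (Finset.mem_univ i₁)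
    have h2 : 0 < ‖g i₁‖ := norm_pos_iff.mpr (by simpa using hi₁)
    have := div_pos h2 (hv i₁)
    linarith
  have hle : ∀ j, ‖g j‖ ≤ α * v j := by
    intro j
    have h1 : ‖g j‖ / v j ≤ α :=
      Finset.le_sup' (fun i => ‖g i‖ / v i) (Finset.mem_univ j)
    rw [div_le_iff₀ (hv j)] at h1
    linarith
  have heq : ‖g i₀‖ = α * v i₀ := by
    have h2 : α = ‖g i₀‖ / v i₀ := hi₀
    rw [h2, div_mul_cancel₀ _ (hv i₀).ne']
  have hfin : ‖μ‖ * (α * v i₀) ≤ α * (c * v i₀) := by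
    rw [← heq]
    calc ‖μ‖ * ‖g i₀‖ ≤ ∑ j, T i₀ j * ‖g j‖ := hbound i₀
    _ ≤ ∑ j, T i₀ j * (α * v j) := by
        apply Finset.sum_le_sum
        intro j _
        exact mul_le_mul_of_nonneg_left (hle j) (hT i₀ j)
    _ = α * (T *ᵥ v) i₀ := by rw [mulVec_apply, Finset.mul_sum]; apply Finset.sum_congr rfl; intro j _; ring
    _ ≤ α * (c * v i₀) := mul_le_mul_of_nonneg_left (hTv i₀) hαpos.le
  have hvp := hv i₀
  show ‖μ‖ ≤ c
  nlinarith [hfin, mul_pos hαpos hvp]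

lemma exists_bound (v : Fin n → ℝ) (hv : ∀ i, 0 < v i) (u : Fin n → ℝ) :
    ∃ β, 0 ≤ β ∧ ∀ i, |u i| ≤ β * v i := by
  rcases isEmpty_or_nonempty (Fin n) with h | h
  · exact ⟨0, le_rfl, fun i => h.elim i⟩
  · have hne : (Finset.univ : Finset (Fin n)).Nonempty := Finset.univ_nonempty
    refine ⟨Finset.univ.sup' hne (fun i => |u i| / v i), ?_, ?_⟩
    · obtain ⟨i⟩ := h
      exact le_trans (div_nonneg (abs_nonneg _) (hv i).le)
        (Finset.le_sup' (fun i => |u i| / v i) (Finset.mem_univ i))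
    · intro i
      have h1 : |u i| / v i ≤ _ := Finset.le_sup' (fun i => |u i| / v i) (Finset.mem_univ i)
      rw [div_le_iff₀ (hv i)] at h1
      linarith

lemma exists_contraction (v w : Fin n → ℝ) (hv : ∀ i, 0 < v i) (hw : ∀ i, 0 < w i)
    (t : Fin n → ℝ) (ht : ∀ i, t i ≤ v i - 2 * w i) (htnn : ∀ i, 0 ≤ t i) :
    ∃ c, 0 ≤ c ∧ c < 1 ∧ ∀ i, t i ≤ c * v i := by
  rcases isEmpty_or_nonempty (Fin n) with h | h
  · exact ⟨0, le_rfl, one_pos, fun i => h.elim i⟩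
  · have hne : (Finset.univ : Finset (Fin n)).Nonempty := Finset.univ_nonempty
    set c0 := Finset.univ.sup' hne (fun i => (v i - 2 * w i) / v i) with hc0def
    refine ⟨max c0 0, le_max_right _ _, ?_, ?_⟩
    · apply max_lt _ one_pos
      rw [Finset.sup'_lt_iff]
      intro i _
      rw [div_lt_one (hv i)]
      linarith [hw i]
    · intro i
      have h1 : (v i - 2 * w i) / v i ≤ c0 :=
        Finset.le_sup' (fun i => (v i - 2 * w i) / v i) (Finset.mem_univ i)
      have h2 : v i - 2 * w i = ((v i - 2 * w i) / v i) * v i := by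
        rw [div_mul_cancel₀ _ (hv i).ne']
      calc t i ≤ v i - 2 * w i := ht i
      _ = ((v i - 2 * w i) / v i) * v i := h2
      _ ≤ c0 * v i := mul_le_mul_of_nonneg_right h1 (hv i).le
      _ ≤ max c0 0 * v i := mul_le_mul_of_nonneg_right (le_max_left _ _) (hv i).le

end ICPAux

open ICPAux in
theorem stmt9 (A D M N φ Ω₁ Ω₂ Ψ : Matrix (Fin n) (Fin n) ℝ)
    (q : Fin n → ℝ) (ζ : (Fin n → ℝ) → (Fin n → ℝ)) (γ : ℝ)
    (hγ : 0 < γ) (hΩ₁ : PosDiag Ω₁) (hΩ₂ : PosDiag Ω₂)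
    (hA : IsHplus A)
    (hD : D = Matrix.diagonal (fun i => A i i))
    (hφ : φ.IsDiag) (hφ0 : ∀ i, 0 ≤ φ i i)
    (hsplit : A = (M + φ) - (N + φ))
    (hMφpos : ∀ i, 0 < (M + φ) i i)
    (hHsplit : IsMmat (compMat (M + φ) - matAbs (N + φ)))
    (hΩge : ∀ i j, (D * Ω₁) i j ≤ Ω₂ i j)
    (hΨ : ∀ i j, 0 ≤ Ψ i j)
    (hLip : ∀ u v : Fin n → ℝ, ∀ i, |(ζ u - ζ v) i| ≤ (Ψ *ᵥ vecAbs (u - v)) i)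
    (hMcond : IsMmat (compMat (M * Ω₁) - matAbs (N * Ω₁)
      - (2 : ℝ) • (matAbs A * Ψ * matAbs A⁻¹ * Ω₂))) :
    specRad (matAbs (Ω₂ + M * Ω₁ + φ * Ω₁)⁻¹ *
      (matAbs (N * Ω₁ + φ * Ω₁) + matAbs (Ω₂ - A * Ω₁)
        + (2 : ℝ) • (matAbs A * Ψ * matAbs A⁻¹ * Ω₂))) < 1 ∧
    ∀ x z : ℕ → Fin n → ℝ, Method31 A M N φ Ω₁ Ω₂ q ζ γ x z →
      ∀ xs zs : Fin n → ℝ,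
        A *ᵥ zs = γ⁻¹ • (Ω₂ *ᵥ (vecAbs xs - xs)) - q →
        (Ω₂ + M * Ω₁ + φ * Ω₁) *ᵥ xs =
          (N * Ω₁ + φ * Ω₁) *ᵥ xs + (Ω₂ - A * Ω₁) *ᵥ vecAbs xs
            - γ • (A *ᵥ ζ zs) - γ • q →
        Tendsto x atTop (𝓝 xs) ∧ Tendsto z atTop (𝓝 zs) ∧ SolvesICP A q ζ zs := by
  classical
  set X := matAbs A * Ψ * matAbs A⁻¹ * Ω₂ with hXdef
  set Bm := Ω₂ + M * Ω₁ + φ * Ω₁ with hBmdef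
  set numer := matAbs (N * Ω₁ + φ * Ω₁) + matAbs (Ω₂ - A * Ω₁) + (2:ℝ) • X with hNumdef
  set T := matAbs Bm⁻¹ * numer with hTdef
  obtain ⟨hAcomp, hAdiag⟩ := hA
  obtain ⟨hWZ, hWU, hWinv⟩ := hMcond
  have hΩ1d := hΩ₁.1
  have hΩ1p := hΩ₁.2
  have hΩ2d := hΩ₂.1
  have hΩ2p := hΩ₂.2
  have hΩ2nn : ∀ i j, 0 ≤ Ω₂ i j := by
    intro i j
    by_cases h : i = j
    · subst h; exact (hΩ2p i).le
    · rw [hΩ2d h]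
  have hMN : A = M - N := by rw [hsplit]; abel
  have hXnn : ∀ i j, 0 ≤ X i j := by
    rw [hXdef]
    exact mul_entries_nonneg
      (mul_entries_nonneg (mul_entries_nonneg (fun i j => abs_nonneg _) hΨ)
        (fun i j => abs_nonneg _)) hΩ2nn
  have hNumnn : ∀ i j, 0 ≤ numer i j := by
    intro i j
    rw [hNumdef]
    simp only [Matrix.add_apply, Matrix.smul_apply, smul_eq_mul, matAbs_apply]
    have h1 := abs_nonneg ((N * Ω₁) i j + (φ * Ω₁) i j)
    have h2 := abs_nonneg ((Ω₂ - A * Ω₁) i j)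
    have h2' := abs_nonneg ((Ω₂) i j - (A * Ω₁) i j)
    linarith [hXnn i j]
  have hWdet : IsUnit (compMat (M * Ω₁) - matAbs (N * Ω₁) - (2:ℝ) • X).det :=
    (Matrix.isUnit_iff_isUnit_det _).mp hWU
  obtain ⟨v, hv, hWv, hWd⟩ := inv_one_vec _ hWZ hWdet hWinv
  set W := compMat (M * Ω₁) - matAbs (N * Ω₁) - (2:ℝ) • X with hWdef
  have hvnn : ∀ i, 0 ≤ v i := fun i => (hv i).le
  have hWdiag : ∀ i, W i i = |M i i * Ω₁ i i| - |N i i * Ω₁ i i| - 2 * X i i := by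
    intro i
    rw [hWdef]
    simp only [Matrix.sub_apply, Matrix.smul_apply, smul_eq_mul, matAbs_apply,
      compMat_apply_diag]
    rw [mul_diag_apply M Ω₁ hΩ1d, mul_diag_apply N Ω₁ hΩ1d]
  have hWpos : ∀ i, 0 < W i i := by
    intro i
    have h1 := hWd i
    have h2 := hv i
    nlinarith
  have hMii : ∀ i, 0 < M i i := by
    intro i
    have h1 := hWpos i
    rw [hWdiag i] at h1
    have h2 : A i i = M i i - N i i := by rw [hMN]; simp [Matrix.sub_apply]
    have h3 := hAdiag i
    rw [h2] at h3
    have h4 := hΩ1p i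
    have h5 := hXnn i i
    rw [abs_mul, abs_mul, abs_of_pos h4] at h1
    by_contra hM
    push_neg at hM
    have hN : N i i < 0 := by linarith
    rw [abs_of_nonpos hM, abs_of_neg hN] at h1
    nlinarith
  have hKI : ∀ i j, numer i j + 2 * W i j ≤ compMat Bm i j := by
    intro i j
    by_cases hij : i = j
    · subst hij
      have hBii : Bm i i = Ω₂ i i + M i i * Ω₁ i i + φ i i * Ω₁ i i := by
        rw [hBmdef]
        simp only [Matrix.add_apply]
        rw [mul_diag_apply M Ω₁ hΩ1d, mul_diag_apply φ Ω₁ hΩ1d]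
      have hBpos : 0 < Bm i i := by
        rw [hBii]
        nlinarith [mul_pos (hMii i) (hΩ1p i), mul_nonneg (hφ0 i) (hΩ1p i).le, hΩ2p i]
      have hcB : compMat Bm i i = Ω₂ i i + M i i * Ω₁ i i + φ i i * Ω₁ i i := by
        rw [compMat_apply_diag, abs_of_pos hBpos, hBii]
      have hnum : numer i i = |N i i * Ω₁ i i + φ i i * Ω₁ i i|
          + |Ω₂ i i - A i i * Ω₁ i i| + 2 * X i i := by
        rw [hNumdef]
        simp only [Matrix.add_apply, Matrix.sub_apply, Matrix.smul_apply, smul_eq_mul,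
          matAbs_apply]
        rw [mul_diag_apply N Ω₁ hΩ1d, mul_diag_apply φ Ω₁ hΩ1d, mul_diag_apply A Ω₁ hΩ1d]
      have hΩA : A i i * Ω₁ i i ≤ Ω₂ i i := by
        have h0 := hΩge i i
        rw [hD, mul_diag_apply _ Ω₁ hΩ1d] at h0
        simpa using h0
      have habs2 : |Ω₂ i i - A i i * Ω₁ i i| = Ω₂ i i - A i i * Ω₁ i i :=
        abs_of_nonneg (by linarith)
      have hAi : A i i = M i i - N i i := by rw [hMN]; simp [Matrix.sub_apply]
      have e1 : |M i i * Ω₁ i i| = M i i * Ω₁ i i :=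
        abs_of_pos (mul_pos (hMii i) (hΩ1p i))
      have e2 : |N i i * Ω₁ i i + φ i i * Ω₁ i i| ≤ |N i i * Ω₁ i i| + φ i i * Ω₁ i i := by
        calc |N i i * Ω₁ i i + φ i i * Ω₁ i i| ≤ |N i i * Ω₁ i i| + |φ i i * Ω₁ i i| :=
              abs_add_le _ _
        _ = |N i i * Ω₁ i i| + φ i i * Ω₁ i i := by
            rw [abs_of_nonneg (mul_nonneg (hφ0 i) (hΩ1p i).le)]
      have e3 : N i i * Ω₁ i i ≤ |N i i * Ω₁ i i| := le_abs_self _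
      rw [hcB, hnum, hWdiag i, habs2, hAi, e1]
      nlinarith [e2, e3, hXnn i i]
    · have hphiΩ : (φ * Ω₁) i j = 0 := by
        rw [mul_diag_apply φ Ω₁ hΩ1d, hφ hij, zero_mul]
      have hΩ2ij : Ω₂ i j = 0 := hΩ2d hij
      have hBij : Bm i j = M i j * Ω₁ j j := by
        rw [hBmdef]
        simp only [Matrix.add_apply]
        rw [mul_diag_apply M Ω₁ hΩ1d, hphiΩ, hΩ2ij]
        ring
      have hAij : A i j = M i j - N i j := by rw [hMN]; simp [Matrix.sub_apply]
      have hnum : numer i j = |N i j * Ω₁ j j| + |A i j * Ω₁ j j| + 2 * X i j := by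
        rw [hNumdef]
        simp only [Matrix.add_apply, Matrix.sub_apply, Matrix.smul_apply, smul_eq_mul,
          matAbs_apply]
        rw [mul_diag_apply N Ω₁ hΩ1d, mul_diag_apply A Ω₁ hΩ1d, hphiΩ, hΩ2ij]
        rw [add_zero, zero_sub, abs_neg]
      have hW : W i j = -|M i j * Ω₁ j j| - |N i j * Ω₁ j j| - 2 * X i j := by
        rw [hWdef]
        simp only [Matrix.sub_apply, Matrix.smul_apply, smul_eq_mul, matAbs_apply]
        rw [compMat_apply_off _ hij, mul_diag_apply M Ω₁ hΩ1d, mul_diag_apply N Ω₁ hΩ1d]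
      rw [hnum, hW, compMat_apply_off _ hij, hBij, hAij]
      have e1 : |(M i j - N i j) * Ω₁ j j| ≤ |M i j * Ω₁ j j| + |N i j * Ω₁ j j| := by
        rw [sub_mul]
        exact abs_sub _ _
      linarith [hXnn i j]
  have hKv : ∀ i, (numer *ᵥ v) i + 2 ≤ (compMat Bm *ᵥ v) i := by
    intro i
    have h1 : ∑ j, (numer i j + 2 * W i j) * v j ≤ ∑ j, compMat Bm i j * v j :=
      Finset.sum_le_sum (fun j _ => mul_le_mul_of_nonneg_right (hKI i j) (hvnn j))
    have h2 : ∑ j, (numer i j + 2 * W i j) * v j = (numer *ᵥ v) i + 2 * (W *ᵥ v) i := by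
      rw [ICPAux.mulVec_apply, ICPAux.mulVec_apply, Finset.mul_sum, ← Finset.sum_add_distrib]
      apply Finset.sum_congr rfl
      intro j _
      ring
    have h3 := hWv i
    rw [h3, mul_one] at h2
    have h4 : (compMat Bm *ᵥ v) i = ∑ j, compMat Bm i j * v j := ICPAux.mulVec_apply _ _ _
    linarith
  have hCompBv : ∀ i, 0 < (compMat Bm *ᵥ v) i := by
    intro i
    have h1 := hKv i
    have h2 : 0 ≤ (numer *ᵥ v) i := mulVec_nonneg hNumnn hvnn i
    linarith
  have hBdet : IsUnit Bm.det := det_isUnit_of_comp Bm v hv hCompBv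
  have hcompBdet : IsUnit (compMat Bm).det := by
    apply det_isUnit_of_comp (compMat Bm) v hv
    intro i
    rw [compMat_compMat]
    exact hCompBv i
  set w : Fin n → ℝ := (compMat Bm)⁻¹ *ᵥ (fun _ => 1) with hwdef
  have hCw : ∀ i, (compMat Bm *ᵥ w) i = 1 := by
    intro i
    rw [hwdef, Matrix.mulVec_mulVec, Matrix.mul_nonsing_inv _ hcompBdet, Matrix.one_mulVec]
  have hwnn : ∀ i, 0 ≤ w i := by
    have h1 : ∀ i, (compMat Bm *ᵥ (-w)) i ≤ 0 := by
      intro i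
      rw [Matrix.mulVec_neg]
      simp only [Pi.neg_apply]
      rw [hCw i]
      norm_num
    have h2 := zmat_mono (compMat Bm) v (-w)
      (fun i j hij => compMat_off_nonpos Bm hij) hv hCompBv h1
    intro i
    have h3 := h2 i
    simp only [Pi.neg_apply] at h3
    linarith
  have hwpos : ∀ i, 0 < w i := by
    intro i
    have h1 := hCw i
    rw [ICPAux.mulVec_apply,
      ← Finset.add_sum_erase _ (fun j => compMat Bm i j * w j) (Finset.mem_univ i)] at h1
    have h2 : ∑ j ∈ Finset.univ.erase i, compMat Bm i j * w j ≤ 0 := by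
      apply Finset.sum_nonpos
      intro j hj
      have hij : i ≠ j := fun hh => (Finset.mem_erase.mp hj).1 hh.symm
      exact mul_nonpos_of_nonpos_of_nonneg (compMat_off_nonpos Bm hij) (hwnn j)
    have h3 : 1 ≤ compMat Bm i i * w i := by linarith
    rcases (hwnn i).lt_or_eq with h | h
    · exact h
    · exfalso
      rw [← h, mul_zero] at h3
      linarith
  have hTnn : ∀ i j, 0 ≤ T i j := by
    rw [hTdef]
    exact mul_entries_nonneg (fun i j => abs_nonneg _) hNumnn
  have hTv : ∀ i, (T *ᵥ v) i ≤ v i - 2 * w i := by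
    intro i
    have hunn : ∀ j, 0 ≤ (numer *ᵥ v) j := fun j => mulVec_nonneg hNumnn hvnn j
    set y : Fin n → ℝ := fun j => if 0 ≤ Bm⁻¹ i j then (numer *ᵥ v) j else -((numer *ᵥ v) j)
      with hydef
    have hyabs : ∀ j, |y j| = (numer *ᵥ v) j := by
      intro j
      by_cases h : 0 ≤ Bm⁻¹ i j
      · simp only [hydef, if_pos h]
        exact abs_of_nonneg (hunn j)
      · simp only [hydef, if_neg h]
        rw [abs_neg]
        exact abs_of_nonneg (hunn j)
    have hTvi : (T *ᵥ v) i = (Bm⁻¹ *ᵥ y) i := by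
      rw [hTdef, ← Matrix.mulVec_mulVec, ICPAux.mulVec_apply, ICPAux.mulVec_apply]
      apply Finset.sum_congr rfl
      intro j _
      rw [matAbs_apply]
      by_cases h : 0 ≤ Bm⁻¹ i j
      · simp only [hydef, if_pos h, abs_of_nonneg h]
      · push_neg at h
        simp only [hydef, if_neg (not_le.mpr h)]
        rw [abs_of_neg h]
        ring
    have hBs : Bm *ᵥ (Bm⁻¹ *ᵥ y) = y := by
      rw [Matrix.mulVec_mulVec, Matrix.mul_nonsing_inv _ hBdet, Matrix.one_mulVec]
    have ht : ∀ j, |y j| ≤ (compMat Bm *ᵥ (fun m => v m - 2 * w m)) j := by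
      intro j
      have hsplit2 : (compMat Bm *ᵥ (fun m => v m - 2 * w m)) j
          = (compMat Bm *ᵥ v) j - 2 * (compMat Bm *ᵥ w) j := by
        rw [ICPAux.mulVec_apply, ICPAux.mulVec_apply, ICPAux.mulVec_apply, Finset.mul_sum,
          ← Finset.sum_sub_distrib]
        apply Finset.sum_congr rfl
        intro m _
        ring
      rw [hyabs j, hsplit2, hCw j]
      linarith [hKv j]
    have hsb := solution_bound Bm v hv hCompBv (Bm⁻¹ *ᵥ y) y (fun m => v m - 2 * w m) hBs ht
    have h5 := hsb i
    calc (T *ᵥ v) i = (Bm⁻¹ *ᵥ y) i := hTvi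
    _ ≤ |(Bm⁻¹ *ᵥ y) i| := le_abs_self _
    _ ≤ v i - 2 * w i := h5
  obtain ⟨c, hc0, hc1, hTvc⟩ := exists_contraction v w hv hwpos _ hTv
    (fun i => mulVec_nonneg hTnn hvnn i)
  constructor
  · exact lt_of_le_of_lt (specRad_le T hTnn v hv c hc0 hTvc) hc1
  rintro x z ⟨hzEq, hxEq⟩ xs zs hzs hxs
  simp only [← hBmdef] at hxEq hxs
  obtain ⟨hAZ, hAU, hAinvnn⟩ := hAcomp
  obtain ⟨vA, hvA, hAv, -⟩ := inv_one_vec (compMat A) hAZ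
    ((Matrix.isUnit_iff_isUnit_det _).mp hAU) hAinvnn
  have hAdet : IsUnit A.det := by
    apply det_isUnit_of_comp A vA hvA
    intro i
    rw [hAv i]
    norm_num
  have hxfix : xs = Bm⁻¹ *ᵥ ((N * Ω₁ + φ * Ω₁) *ᵥ xs + (Ω₂ - A * Ω₁) *ᵥ vecAbs xs
      - γ • (A *ᵥ ζ zs) - γ • q) := by
    rw [← hxs, Matrix.mulVec_mulVec, Matrix.nonsing_inv_mul _ hBdet, Matrix.one_mulVec]
  have hγγ : γ * γ⁻¹ = 1 := mul_inv_cancel₀ hγ.ne'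
  have hγi : 0 < γ⁻¹ := inv_pos.mpr hγ
  have hAzdiff : ∀ k, A *ᵥ (z k - zs)
      = γ⁻¹ • (Ω₂ *ᵥ ((vecAbs (x k) - x k) - (vecAbs xs - xs))) := by
    intro k
    rw [Matrix.mulVec_sub, hzEq k, hzs]
    simp only [Matrix.mulVec_sub, smul_sub]
    abel
  have hzdiff : ∀ k, z k - zs
      = A⁻¹ *ᵥ (γ⁻¹ • (Ω₂ *ᵥ ((vecAbs (x k) - x k) - (vecAbs xs - xs)))) := by
    intro k
    rw [← hAzdiff k, Matrix.mulVec_mulVec, Matrix.nonsing_inv_mul _ hAdet, Matrix.one_mulVec]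
  have hzd : ∀ k m, |z k m - zs m|
      ≤ 2 * γ⁻¹ * ((matAbs A⁻¹ * Ω₂) *ᵥ vecAbs (x k - xs)) m := by
    intro k m
    have h1 : z k m - zs m
        = (A⁻¹ *ᵥ (γ⁻¹ • (Ω₂ *ᵥ ((vecAbs (x k) - x k) - (vecAbs xs - xs))))) m := by
      rw [← hzdiff k]
      rfl
    rw [h1, ICPAux.mulVec_apply]
    have hstep : ∀ j, |A⁻¹ m j * (γ⁻¹ • (Ω₂ *ᵥ ((vecAbs (x k) - x k) - (vecAbs xs - xs)))) j|
        ≤ 2 * γ⁻¹ * (|A⁻¹ m j| * Ω₂ j j * |x k j - xs j|) := by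
      intro j
      simp only [Pi.smul_apply, smul_eq_mul]
      rw [diag_mulVec_apply Ω₂ hΩ2d]
      rw [abs_mul, abs_mul, abs_mul, abs_of_pos hγi, abs_of_pos (hΩ2p j)]
      have hd : |((vecAbs (x k) - x k) - (vecAbs xs - xs)) j| ≤ 2 * |x k j - xs j| := by
        have e0 : ((vecAbs (x k) - x k) - (vecAbs xs - xs)) j
            = (|x k j| - |xs j|) - (x k j - xs j) := by
          simp only [Pi.sub_apply, vecAbs]
          ring
        rw [e0]
        calc |(|x k j| - |xs j|) - (x k j - xs j)|
            ≤ |(|x k j| - |xs j|)| + |x k j - xs j| := abs_sub _ _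
        _ ≤ |x k j - xs j| + |x k j - xs j| := by
            have := abs_abs_sub_abs_le_abs_sub (x k j) (xs j)
            linarith
        _ = 2 * |x k j - xs j| := by ring
      have hnn : 0 ≤ |A⁻¹ m j| * (γ⁻¹ * Ω₂ j j) :=
        mul_nonneg (abs_nonneg _) (mul_nonneg hγi.le (hΩ2p j).le)
      nlinarith [mul_le_mul_of_nonneg_left hd hnn]
    calc |∑ j, A⁻¹ m j * (γ⁻¹ • (Ω₂ *ᵥ ((vecAbs (x k) - x k) - (vecAbs xs - xs)))) j|
        ≤ ∑ j, |A⁻¹ m j * (γ⁻¹ • (Ω₂ *ᵥ ((vecAbs (x k) - x k) - (vecAbs xs - xs)))) j| :=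
          Finset.abs_sum_le_sum_abs _ _
    _ ≤ ∑ j, 2 * γ⁻¹ * (|A⁻¹ m j| * Ω₂ j j * |x k j - xs j|) :=
          Finset.sum_le_sum (fun j _ => hstep j)
    _ = 2 * γ⁻¹ * ((matAbs A⁻¹ * Ω₂) *ᵥ vecAbs (x k - xs)) m := by
        rw [ICPAux.mulVec_apply, Finset.mul_sum]
        apply Finset.sum_congr rfl
        intro j _
        rw [mul_diag_apply _ Ω₂ hΩ2d, matAbs_apply]
        have : vecAbs (x k - xs) j = |x k j - xs j| := rfl
        rw [this]
  have hErr : ∀ k i, |x (k+1) i - xs i| ≤ (T *ᵥ vecAbs (x k - xs)) i := by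
    intro k i
    set Δ := (N * Ω₁ + φ * Ω₁) *ᵥ (x k - xs) + (Ω₂ - A * Ω₁) *ᵥ (vecAbs (x k) - vecAbs xs)
      - γ • (A *ᵥ (ζ (z k) - ζ zs)) with hΔdef
    have hdiff : x (k+1) - xs = Bm⁻¹ *ᵥ Δ := by
      have hD1 : Δ = ((N * Ω₁ + φ * Ω₁) *ᵥ x k + (Ω₂ - A * Ω₁) *ᵥ vecAbs (x k)
            - γ • (A *ᵥ ζ (z k)) - γ • q)
          - ((N * Ω₁ + φ * Ω₁) *ᵥ xs + (Ω₂ - A * Ω₁) *ᵥ vecAbs xs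
            - γ • (A *ᵥ ζ zs) - γ • q) := by
        rw [hΔdef]
        simp only [Matrix.mulVec_sub, smul_sub]
        abel
      rw [hD1, Matrix.mulVec_sub, ← hxEq k, ← hxfix]
    have h1 : |x (k+1) i - xs i| = |(Bm⁻¹ *ᵥ Δ) i| := by rw [← hdiff]; rfl
    rw [h1]
    have h3 : ∀ j, vecAbs Δ j ≤ (numer *ᵥ vecAbs (x k - xs)) j := by
      intro j
      have hb1 := abs_mulVec_le (N * Ω₁ + φ * Ω₁) (x k - xs) j
      have hb2 := abs_mulVec_le (Ω₂ - A * Ω₁) (vecAbs (x k) - vecAbs xs) j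
      have hb2' : (matAbs (Ω₂ - A * Ω₁) *ᵥ vecAbs (vecAbs (x k) - vecAbs xs)) j
          ≤ (matAbs (Ω₂ - A * Ω₁) *ᵥ vecAbs (x k - xs)) j := by
        apply mulVec_mono (fun a b => abs_nonneg _)
        intro m
        show |vecAbs (x k) m - vecAbs xs m| ≤ |x k m - xs m|
        exact abs_abs_sub_abs_le_abs_sub _ _
      have hb3 : |(γ • (A *ᵥ (ζ (z k) - ζ zs))) j| ≤ 2 * ((X *ᵥ vecAbs (x k - xs)) j) := by
        have hc1 := abs_mulVec_le A (ζ (z k) - ζ zs) j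
        have hc2 : ∀ m, vecAbs (ζ (z k) - ζ zs) m ≤ (Ψ *ᵥ vecAbs (z k - zs)) m :=
          fun m => hLip (z k) zs m
        have hc3 : ∀ m, vecAbs (z k - zs) m
            ≤ 2 * γ⁻¹ * ((matAbs A⁻¹ * Ω₂) *ᵥ vecAbs (x k - xs)) m := fun m => hzd k m
        have hc4 : (matAbs A *ᵥ vecAbs (ζ (z k) - ζ zs)) j
            ≤ (matAbs A *ᵥ (Ψ *ᵥ vecAbs (z k - zs))) j :=
          mulVec_mono (fun a b => abs_nonneg _) hc2 j
        have hc5 : ∀ m, (Ψ *ᵥ vecAbs (z k - zs)) m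
            ≤ (Ψ *ᵥ (fun m => 2 * γ⁻¹ * ((matAbs A⁻¹ * Ω₂) *ᵥ vecAbs (x k - xs)) m)) m :=
          fun m => mulVec_mono hΨ hc3 m
        have hc6 : (matAbs A *ᵥ (Ψ *ᵥ vecAbs (z k - zs))) j
            ≤ (matAbs A *ᵥ (Ψ *ᵥ (fun m => 2 * γ⁻¹
              * ((matAbs A⁻¹ * Ω₂) *ᵥ vecAbs (x k - xs)) m))) j :=
          mulVec_mono (fun a b => abs_nonneg _) hc5 j
        have hc7 : (matAbs A *ᵥ (Ψ *ᵥ (fun m => 2 * γ⁻¹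
              * ((matAbs A⁻¹ * Ω₂) *ᵥ vecAbs (x k - xs)) m))) j
            = 2 * γ⁻¹ * ((X *ᵥ vecAbs (x k - xs)) j) := by
          have e1 : (fun m => 2 * γ⁻¹ * ((matAbs A⁻¹ * Ω₂) *ᵥ vecAbs (x k - xs)) m)
              = (2 * γ⁻¹) • ((matAbs A⁻¹ * Ω₂) *ᵥ vecAbs (x k - xs)) := by
            funext m
            simp [Pi.smul_apply, smul_eq_mul]
          rw [e1, Matrix.mulVec_smul, Matrix.mulVec_smul,
            Matrix.mulVec_mulVec, Matrix.mulVec_mulVec]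
          have e2 : matAbs A * Ψ * (matAbs A⁻¹ * Ω₂) = X := by
            rw [hXdef]
            simp only [Matrix.mul_assoc]
          rw [e2]
          simp [Pi.smul_apply, smul_eq_mul]
        have e3 : |(γ • (A *ᵥ (ζ (z k) - ζ zs))) j| = γ * |(A *ᵥ (ζ (z k) - ζ zs)) j| := by
          simp only [Pi.smul_apply, smul_eq_mul, abs_mul, abs_of_pos hγ]
        rw [e3]
        have e4 : (matAbs A *ᵥ vecAbs (ζ (z k) - ζ zs)) j
            ≤ 2 * γ⁻¹ * ((X *ᵥ vecAbs (x k - xs)) j) := by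
          rw [← hc7]
          exact le_trans hc4 hc6
        have e5 : γ * |(A *ᵥ (ζ (z k) - ζ zs)) j|
            ≤ γ * (2 * γ⁻¹ * ((X *ᵥ vecAbs (x k - xs)) j)) :=
          mul_le_mul_of_nonneg_left (le_trans hc1 e4) hγ.le
        have e6 : γ * (2 * γ⁻¹ * ((X *ᵥ vecAbs (x k - xs)) j))
            = 2 * ((X *ᵥ vecAbs (x k - xs)) j) := by
          field_simp
        linarith
      have hΔj : Δ j = ((N * Ω₁ + φ * Ω₁) *ᵥ (x k - xs)) j
          + ((Ω₂ - A * Ω₁) *ᵥ (vecAbs (x k) - vecAbs xs)) j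
          - (γ • (A *ᵥ (ζ (z k) - ζ zs))) j := by
        rw [hΔdef]
        simp only [Pi.add_apply, Pi.sub_apply]
      have htot : |Δ j| ≤ |((N * Ω₁ + φ * Ω₁) *ᵥ (x k - xs)) j|
          + |((Ω₂ - A * Ω₁) *ᵥ (vecAbs (x k) - vecAbs xs)) j|
          + |(γ • (A *ᵥ (ζ (z k) - ζ zs))) j| := by
        rw [hΔj]
        have ha := abs_sub (((N * Ω₁ + φ * Ω₁) *ᵥ (x k - xs)) j
            + ((Ω₂ - A * Ω₁) *ᵥ (vecAbs (x k) - vecAbs xs)) j)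
          ((γ • (A *ᵥ (ζ (z k) - ζ zs))) j)
        have hb := abs_add_le (((N * Ω₁ + φ * Ω₁) *ᵥ (x k - xs)) j)
          (((Ω₂ - A * Ω₁) *ᵥ (vecAbs (x k) - vecAbs xs)) j)
        linarith
      have hnumv : (numer *ᵥ vecAbs (x k - xs)) j
          = (matAbs (N * Ω₁ + φ * Ω₁) *ᵥ vecAbs (x k - xs)) j
          + (matAbs (Ω₂ - A * Ω₁) *ᵥ vecAbs (x k - xs)) j
          + 2 * ((X *ᵥ vecAbs (x k - xs)) j) := by
        rw [hNumdef]
        simp only [Matrix.add_mulVec, Pi.add_apply, Matrix.smul_mulVec,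
          Pi.smul_apply, smul_eq_mul]
      show |Δ j| ≤ _
      rw [hnumv]
      linarith [htot, hb1, le_trans hb2 hb2', hb3]
    calc |(Bm⁻¹ *ᵥ Δ) i| ≤ (matAbs Bm⁻¹ *ᵥ vecAbs Δ) i := abs_mulVec_le Bm⁻¹ Δ i
    _ ≤ (matAbs Bm⁻¹ *ᵥ (numer *ᵥ vecAbs (x k - xs))) i :=
        mulVec_mono (fun a b => abs_nonneg _) h3 i
    _ = (T *ᵥ vecAbs (x k - xs)) i := by rw [hTdef, ← Matrix.mulVec_mulVec]
  obtain ⟨β, hβ0, hβ⟩ := exists_bound v hv (x 0 - xs)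
  have hgeo : ∀ k i, |x k i - xs i| ≤ β * c ^ k * v i := by
    intro k
    induction k with
    | zero =>
      intro i
      have := hβ i
      simpa [pow_zero, mul_one] using this
    | succ k ih =>
      intro i
      have h1 := hErr k i
      have h2 : (T *ᵥ vecAbs (x k - xs)) i ≤ (T *ᵥ (fun j => β * c ^ k * v j)) i :=
        mulVec_mono hTnn (fun j => ih j) i
      have h3 : (T *ᵥ (fun j => β * c ^ k * v j)) i = β * c ^ k * (T *ᵥ v) i := by
        rw [ICPAux.mulVec_apply, ICPAux.mulVec_apply, Finset.mul_sum]
        apply Finset.sum_congr rfl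
        intro j _
        ring
      have h5 : 0 ≤ β * c ^ k := mul_nonneg hβ0 (pow_nonneg hc0 k)
      calc |x (k+1) i - xs i| ≤ (T *ᵥ vecAbs (x k - xs)) i := h1
      _ ≤ β * c ^ k * (T *ᵥ v) i := by rw [← h3]; exact h2
      _ ≤ β * c ^ k * (c * v i) := mul_le_mul_of_nonneg_left (hTvc i) h5
      _ = β * c ^ (k+1) * v i := by ring
  have hcpow : Tendsto (fun k : ℕ => c ^ k) atTop (𝓝 0) :=
    tendsto_pow_atTop_nhds_zero_of_lt_one hc0 hc1
  have hxconv : Tendsto x atTop (𝓝 xs) := by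
    rw [tendsto_pi_nhds]
    intro i
    rw [← tendsto_sub_nhds_zero_iff]
    apply squeeze_zero_norm (a := fun k => β * v i * c ^ k)
    · intro k
      rw [Real.norm_eq_abs]
      calc |x k i - xs i| ≤ β * c ^ k * v i := hgeo k i
      _ = β * v i * c ^ k := by ring
    · simpa using hcpow.const_mul (β * v i)
  refine ⟨hxconv, ?_, ?_⟩
  · rw [tendsto_pi_nhds]
    intro m
    rw [← tendsto_sub_nhds_zero_iff]
    apply squeeze_zero_norm (a := fun k => 2 * γ⁻¹ * (β * ((matAbs A⁻¹ * Ω₂) *ᵥ v) m) * c ^ k)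
    · intro k
      rw [Real.norm_eq_abs]
      have h1 := hzd k m
      have h2 : ((matAbs A⁻¹ * Ω₂) *ᵥ vecAbs (x k - xs)) m
          ≤ ((matAbs A⁻¹ * Ω₂) *ᵥ (fun j => β * c ^ k * v j)) m := by
        apply mulVec_mono (mul_entries_nonneg (fun a b => abs_nonneg _) hΩ2nn)
        intro j
        exact hgeo k j
      have h3 : ((matAbs A⁻¹ * Ω₂) *ᵥ (fun j => β * c ^ k * v j)) m
          = β * c ^ k * (((matAbs A⁻¹ * Ω₂) *ᵥ v) m) := by
        rw [ICPAux.mulVec_apply, ICPAux.mulVec_apply, Finset.mul_sum]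
        apply Finset.sum_congr rfl
        intro j _
        ring
      have h4 : (0:ℝ) ≤ 2 * γ⁻¹ := by positivity
      calc |z k m - zs m| ≤ 2 * γ⁻¹ * (((matAbs A⁻¹ * Ω₂) *ᵥ vecAbs (x k - xs)) m) := h1
      _ ≤ 2 * γ⁻¹ * (β * c ^ k * (((matAbs A⁻¹ * Ω₂) *ᵥ v) m)) := by
          apply mul_le_mul_of_nonneg_left _ h4
          rw [← h3]
          exact h2
      _ = 2 * γ⁻¹ * (β * (((matAbs A⁻¹ * Ω₂) *ᵥ v) m)) * c ^ k := by ring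
    · simpa using hcpow.const_mul (2 * γ⁻¹ * (β * (((matAbs A⁻¹ * Ω₂) *ᵥ v) m)))
  · have hq1 : ∀ i, (A *ᵥ zs) i + q i = γ⁻¹ * (Ω₂ i i * (|xs i| - xs i)) := by
      intro i
      have h1 := congrFun hzs i
      simp only [Pi.sub_apply, Pi.smul_apply, smul_eq_mul] at h1
      rw [diag_mulVec_apply Ω₂ hΩ2d] at h1
      have h2 : (vecAbs xs - xs) i = |xs i| - xs i := rfl
      rw [h2] at h1
      linarith
    have hAkey : A *ᵥ (Ω₁ *ᵥ (xs + vecAbs xs)) = A *ᵥ (γ • (zs - ζ zs)) := by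
      funext i
      have E1 := congrFun hxs i
      rw [hBmdef] at E1
      have E2 := congrFun hzs i
      simp only [Matrix.add_mulVec, Matrix.sub_mulVec, Matrix.mulVec_sub, Pi.add_apply,
        Pi.sub_apply, Pi.smul_apply, smul_eq_mul] at E1 E2
      have V4 : (M * Ω₁) *ᵥ xs = (A * Ω₁) *ᵥ xs + (N * Ω₁) *ᵥ xs := by
        rw [hMN, Matrix.sub_mul, Matrix.sub_mulVec]
        abel
      have V4i := congrFun V4 i
      simp only [Pi.add_apply] at V4i
      have VL : (A *ᵥ (Ω₁ *ᵥ (xs + vecAbs xs))) i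
          = ((A * Ω₁) *ᵥ xs) i + ((A * Ω₁) *ᵥ vecAbs xs) i := by
        rw [Matrix.mulVec_mulVec, Matrix.mulVec_add]
        simp only [Pi.add_apply]
      have VR : (A *ᵥ (γ • (zs - ζ zs))) i = γ * ((A *ᵥ zs) i) - γ * ((A *ᵥ ζ zs) i) := by
        rw [Matrix.mulVec_smul, Matrix.mulVec_sub]
        simp only [Pi.smul_apply, Pi.sub_apply, smul_eq_mul]
        ring
      rw [VL, VR]
      linear_combination E1 - V4i - γ * E2
        - ((Ω₂ *ᵥ vecAbs xs) i - (Ω₂ *ᵥ xs) i) * hγγ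
    have key : Ω₁ *ᵥ (xs + vecAbs xs) = γ • (zs - ζ zs) := by
      have h0 := congrArg (fun u => A⁻¹ *ᵥ u) hAkey
      have e : A⁻¹ * (A * Ω₁) = Ω₁ := by
        rw [← Matrix.mul_assoc, Matrix.nonsing_inv_mul _ hAdet, Matrix.one_mul]
      simpa [Matrix.mulVec_mulVec, e, Matrix.nonsing_inv_mul _ hAdet,
        Matrix.one_mulVec] using h0
    have hzz : ∀ i, zs i - ζ zs i = γ⁻¹ * (Ω₁ i i * (xs i + |xs i|)) := by
      intro i
      have h1 := congrFun key i
      rw [diag_mulVec_apply Ω₁ hΩ1d] at h1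
      simp only [Pi.smul_apply, smul_eq_mul, Pi.sub_apply, Pi.add_apply] at h1
      have h2 : vecAbs xs i = |xs i| := rfl
      rw [h2] at h1
      linear_combination (-γ⁻¹) * h1 - (zs i - ζ zs i) * hγγ
    refine ⟨?_, ?_, ?_⟩
    · intro i
      have h1 := hq1 i
      have h2 := le_abs_self (xs i)
      have h3 := hΩ2p i
      show 0 ≤ (A *ᵥ zs) i + q i
      rw [h1]
      exact mul_nonneg hγi.le (mul_nonneg h3.le (by linarith))
    · intro i
      show 0 ≤ zs i - ζ zs i
      rw [hzz i]
      exact mul_nonneg hγi.le (mul_nonneg (hΩ1p i).le (by linarith [neg_abs_le (xs i)]))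
    · show ∑ i, (zs - ζ zs) i * (A *ᵥ zs + q) i = 0
      apply Finset.sum_eq_zero
      intro i _
      have h1 := hzz i
      have h2 := hq1 i
      have h3 : (zs - ζ zs) i = zs i - ζ zs i := rfl
      have h4 : (A *ᵥ zs + q) i = (A *ᵥ zs) i + q i := rfl
      rw [h3, h4, h1, h2]
      have h5 : (xs i + |xs i|) * (|xs i| - xs i) = 0 := by
        rcases abs_cases (xs i) with ⟨e1, e2⟩ | ⟨e1, e2⟩ <;> rw [e1] <;> ring
      linear_combination (γ⁻¹ * Ω₁ i i * γ⁻¹ * Ω₂ i i) * h5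

end
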